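/- Let S be a semigroup that is the disjoint union of free monogenic subsemigroups ⟨a⟩, ⟨b⟩, ⟨c⟩, and suppose ab = ba = a^i, ac = ca = a^j, bc = c², cb = b² for positive integers i, j. Then i = j. -/

import Mathlib

/-- `pw a n` is `a ^ n` for `n ≥ 1` (with junk value `a` at `n = 0`),
defined in any magma. -/
def pw {S : Type*} [Mul S] (a : S) : ℕ → S
  | 0 => a
  | 1 => a
  | n + 2 => pw a (n + 1) * a

/-- The monogenic subsemigroup `⟨a⟩ = {a^n : n ≥ 1}`. -/
def genSet {S : Type*} [Mul S] (a : S) : Set S := {x | ∃ n, 1 ≤ n ∧ pw a n = x}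

/-- `a` has infinite order: its positive powers are pairwise distinct,
i.e. `⟨a⟩` is free monogenic. -/
def InfOrder {S : Type*} [Mul S] (a : S) : Prop :=
  ∀ m n : ℕ, 1 ≤ m → 1 ≤ n → pw a m = pw a n → m = n

/-!
The product `a b b` is computed in two ways. Absorbing one `b` at a time gives
`a^(2i-1)`, while rewriting `b b = c b` first gives `a c b = a^j b = a^(j-1+i)`.
Since `a` has infinite order, `2i - 1 = j - 1 + i`, i.e. `i = j`.
-/

section Pw

variable {S : Type*}

lemma pw_succ [Mul S] (a : S) {n : ℕ} (hn : 1 ≤ n) : pw a (n + 1) = pw a n * a := by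
  obtain ⟨m, rfl⟩ := Nat.exists_eq_add_of_le' hn
  rfl

lemma pw_add [Semigroup S] (a : S) {m n : ℕ} (hm : 1 ≤ m) (hn : 1 ≤ n) :
    pw a (m + n) = pw a m * pw a n := by
  induction n, hn using Nat.le_induction with
  | base => exact pw_succ a hm
  | succ n hn ih => rw [← add_assoc, pw_succ a (by omega), ih, pw_succ a hn, mul_assoc]

lemma pw_mul_of_mul_eq_pw [Semigroup S] {a b : S} {i : ℕ} (hi : 1 ≤ i) (hab : a * b = pw a i)
    {k : ℕ} (hk : 1 ≤ k) : pw a k * b = pw a (k - 1 + i) := by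
  obtain ⟨m, rfl⟩ := Nat.exists_eq_add_of_le' hk
  rcases Nat.eq_zero_or_pos m with rfl | hm
  · simpa [pw] using hab
  · rw [pw_succ a hm, mul_assoc, hab, ← pw_add a hm hi, Nat.add_sub_cancel]

end Pw

theorem stmt_14_general {S : Type*} [Semigroup S] (a b c : S)
    (ha : InfOrder a)
    (i j : ℕ) (hi : 1 ≤ i) (hj : 1 ≤ j)
    (h1 : a * b = pw a i)
    (h3 : a * c = pw a j)
    (h6 : c * b = pw b 2) :
    i = j := by
  have habb : a * (b * b) = pw a (i - 1 + i) := by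
    rw [← mul_assoc, h1, pw_mul_of_mul_eq_pw hi h1 hi]
  have hacb : a * (c * b) = pw a (j - 1 + i) := by
    rw [← mul_assoc, h3, pw_mul_of_mul_eq_pw hi h1 hj]
  have hbb : c * b = b * b := h6
  have := ha _ _ (by omega) (by omega) (habb.symm.trans (hbb ▸ hacb))
  omega

theorem stmt_14 {S : Type*} [Semigroup S] (a b c : S)
    (ha : InfOrder a) (hb : InfOrder b) (hc : InfOrder c)
    (hab : genSet a ∩ genSet b = ∅) (hac : genSet a ∩ genSet c = ∅)
    (hbc : genSet b ∩ genSet c = ∅)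
    (hcover : genSet a ∪ genSet b ∪ genSet c = Set.univ)
    (i j : ℕ) (hi : 1 ≤ i) (hj : 1 ≤ j)
    (h1 : a * b = pw a i) (h2 : b * a = pw a i)
    (h3 : a * c = pw a j) (h4 : c * a = pw a j)
    (h5 : b * c = pw c 2) (h6 : c * b = pw b 2) :
    i = j :=
  stmt_14_general a b c ha i j hi hj h1 h3 h6
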